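/- arXiv:2601.16194 — 2 statements merged into one kernel-verified Lean document; each statement's English description precedes it below -/
import Mathlib

section
/- If two labels L1 and L2 end at the same node, belong to the same day, and L1 is componentwise at most L2 in accumulated time, reduced cost, daily working time, daily driving distance, and compartment loads, with visited-client sets and compartment-client sets of L1 contained in those of L2, then for every feasible extension sequence of L2 to a complete route, applying the same extension sequence to L1 is also feasible and yields a route with reduced cost at most that obtained from L2 (validity of the same-day dominance rule). -/
open scoped BigOperators

/-- A label of the labeling algorithm: current node, accumulated time, accumulated
reduced cost, day, set of visited clients, compartment loads, compartment client
sets, daily working time and daily driving distance. -/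
structure Label (V C : Type) where
  node : V
  t : ℝ
  cbar : ℝ
  day : ℕ
  S : Set V
  load : C → ℝ
  O : C → Set V
  g : ℝ
  o : ℝ

/-- Problem data: travel times, service times, arc reduced costs, time-window
bounds, distances, demands, compartment capacities, total capacity, daily working
time limit T, daily driving limit Dist, and break duration B. -/
structure Params (V C : Type) where
  tt : V → V → ℝ
  u : V → ℝ
  rc : V → V → ℝ
  ws : V → ℝ
  we : V → ℝ
  dst : V → V → ℝ
  Q : V → ℝ
  cap : C → ℝ
  Ltot : ℝ
  T : ℝ
  DistMax : ℝ
  B : ℝ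

/-- Resource extension along an arc to node `st.1`, with compartment choice
`st.2.1` and break indicator `st.2.2`. -/
def extendLabel {V C : Type} [DecidableEq C] (P : Params V C) (L : Label V C)
    (st : V × C × Bool) : Label V C :=
  { node := st.1
    t := max (L.t + P.tt L.node st.1 + P.u L.node + (if st.2.2 then P.B else 0)) (P.ws st.1)
    cbar := L.cbar + P.rc L.node st.1
    day := L.day + (if st.2.2 then 1 else 0)
    S := L.S ∪ {st.1}
    load := Function.update L.load st.2.1 (L.load st.2.1 + P.Q st.1)
    O := Function.update L.O st.2.1 (L.O st.2.1 ∪ {st.1})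
    g := if st.2.2 then 0 else L.g + P.tt L.node st.1 + P.u L.node
    o := if st.2.2 then 0 else L.o + P.dst L.node st.1 }

/-- Feasibility of a single extension: time-window upper bound, compartment and
total capacities, elementarity, and daily working-time and driving limits. -/
def feasStep {V C : Type} [DecidableEq C] [Fintype C] (P : Params V C)
    (L : Label V C) (st : V × C × Bool) : Prop :=
  (extendLabel P L st).t ≤ P.we st.1 ∧
  (∀ m, (extendLabel P L st).load m ≤ P.cap m) ∧
  (∑ m, (extendLabel P L st).load m) ≤ P.Ltot ∧
  st.1 ∉ L.S ∧
  (extendLabel P L st).g ≤ P.T ∧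
  (extendLabel P L st).o ≤ P.DistMax

/-- Feasibility of a sequence of extensions. -/
def feasSeq {V C : Type} [DecidableEq C] [Fintype C] (P : Params V C) :
    Label V C → List (V × C × Bool) → Prop
  | _, [] => True
  | L, st :: rest => feasStep P L st ∧ feasSeq P (extendLabel P L st) rest

/-- The label obtained after applying a sequence of extensions. -/
def applySeq {V C : Type} [DecidableEq C] (P : Params V C) (L : Label V C)
    (steps : List (V × C × Bool)) : Label V C :=
  steps.foldl (extendLabel P) L

/-- Same-day dominance of `L1` over `L2`. -/
def SameDayDom {V C : Type} (L1 L2 : Label V C) : Prop :=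
  L1.node = L2.node ∧ L1.day = L2.day ∧ L1.t ≤ L2.t ∧ L1.cbar ≤ L2.cbar ∧
  L1.g ≤ L2.g ∧ L1.o ≤ L2.o ∧ L1.S ⊆ L2.S ∧
  (∀ m, L1.load m ≤ L2.load m) ∧ (∀ m, L1.O m ⊆ L2.O m)

/-- Inter-day dominance of `L1` over `L2` with break duration `B`. -/
def InterDayDom {V C : Type} (B : ℝ) (L1 L2 : Label V C) : Prop :=
  L1.node = L2.node ∧ L1.t ≤ L2.t - B ∧ L1.cbar ≤ L2.cbar ∧ L1.day < L2.day ∧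
  L1.S ⊆ L2.S ∧ (∀ m, L1.load m ≤ L2.load m) ∧ (∀ m, L1.O m ⊆ L2.O m)


/-!
Every resource extension function is non-decreasing in each resource and the
capacity constraints are upper bounds, so same-day dominance is an invariant of
extension along a common arc, and whatever extension `L2` can afford, the
smaller resources of `L1` afford as well. Induction along the route.
-/

namespace SameDayDom

variable {V C : Type} [DecidableEq C] {P : Params V C} {L1 L2 : Label V C}

theorem extendLabel (hdom : SameDayDom L1 L2) (st : V × C × Bool) :
    SameDayDom (_root_.extendLabel P L1 st) (_root_.extendLabel P L2 st) := by
  obtain ⟨hnode, hday, ht, hcbar, hg, ho, hS, hload, hO⟩ := hdom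
  refine ⟨rfl, by simp [_root_.extendLabel, hday], ?_, ?_, ?_, ?_,
    Set.union_subset_union_left _ hS, fun m => ?_, fun m => ?_⟩
  · simp only [_root_.extendLabel, hnode]
    exact max_le_max_right _ (by linarith)
  · simp only [_root_.extendLabel, hnode]
    linarith
  · simp only [_root_.extendLabel, hnode]
    split_ifs <;> linarith
  · simp only [_root_.extendLabel, hnode]
    split_ifs <;> linarith
  · simp only [_root_.extendLabel, Function.update_apply]
    split_ifs with hm
    · subst hm; linarith [hload st.2.1]
    · exact hload m
  · simp only [_root_.extendLabel, Function.update_apply]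
    split_ifs with hm
    · subst hm; exact Set.union_subset_union_left _ (hO _)
    · exact hO m

theorem applySeq (hdom : SameDayDom L1 L2) (steps : List (V × C × Bool)) :
    SameDayDom (_root_.applySeq P L1 steps) (_root_.applySeq P L2 steps) := by
  induction steps generalizing L1 L2 with
  | nil => exact hdom
  | cons st rest ih => exact ih (hdom.extendLabel st)

variable [Fintype C]

theorem feasStep (hdom : SameDayDom L1 L2) {st : V × C × Bool}
    (hfeas : _root_.feasStep P L2 st) : _root_.feasStep P L1 st := by
  obtain ⟨-, -, ht, -, hg, ho, -, hload, -⟩ := hdom.extendLabel (P := P) st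
  obtain ⟨-, -, -, -, -, -, hS, -, -⟩ := hdom
  obtain ⟨hwe, hcap, hLtot, hnew, hT, hDist⟩ := hfeas
  exact ⟨ht.trans hwe, fun m => (hload m).trans (hcap m),
    (Finset.sum_le_sum fun m _ => hload m).trans hLtot,
    fun hmem => hnew (hS hmem), hg.trans hT, ho.trans hDist⟩

theorem feasSeq (hdom : SameDayDom L1 L2) {steps : List (V × C × Bool)}
    (hfeas : _root_.feasSeq P L2 steps) : _root_.feasSeq P L1 steps := by
  induction steps generalizing L1 L2 with
  | nil => trivial
  | cons st rest ih =>
    obtain ⟨hstep, hrest⟩ := hfeas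
    exact ⟨hdom.feasStep hstep, ih (hdom.extendLabel st) hrest⟩

end SameDayDom

/-- Validity of the same-day dominance rule: if `L1` same-day
dominates `L2`, then every feasible extension sequence of `L2` to a complete
route (ending at the sink `δ`) is also feasible from `L1` and yields a route
with reduced cost at most that obtained from `L2`. -/
theorem same_day_dominance_valid {V C : Type} [DecidableEq C] [Fintype C]
    (P : Params V C) (δ : V) (L1 L2 : Label V C) (hdom : SameDayDom L1 L2) :
    ∀ steps : List (V × C × Bool),
      (applySeq P L2 steps).node = δ → feasSeq P L2 steps →
      feasSeq P L1 steps ∧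
        (applySeq P L1 steps).cbar ≤ (applySeq P L2 steps).cbar := by
  intro steps _ hfeas
  obtain ⟨-, -, -, hcbar, -⟩ := hdom.applySeq (P := P) steps
  exact ⟨hdom.feasSeq hfeas, hcbar⟩
end

section
/- Validity of the inter-day dominance rule: if labels L1 and L2 end at the same node with t(L1) ≤ t(L2) − B, c̄(L1) ≤ c̄(L2), d(L1) < d(L2), S(L1) ⊆ S(L2), l_m(L1) ≤ l_m(L2) and O_m(L1) ⊆ O_m(L2) for all compartments m, then for any feasible extension of L2 along an arc (i,j) without a break, the extension of L1 along (i,j) taken with an immediate break of duration B is feasible, arrives no later, has reduced cost no larger, and has daily working time and driving distance resources equal to their post-break values (hence at most those of L2's extension). -/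
open scoped BigOperators

/-! Taking the break at once costs `L1` the break duration `B`, which its head start of at least
`B` over `L2` absorbs, and resets its daily working time and driving distance to zero, below the
values `L2` reaches without a break. Every other resource of the extension is monotone in the
label, so the inter-day dominance conditions carry over and `L2`'s feasibility transfers to `L1`. -/

section ExtendLabel

variable {V C : Type} [DecidableEq C] (P : Params V C)

@[simp]
theorem extendLabel_g_true (L : Label V C) (j : V) (m : C) :
    (extendLabel P L (j, m, true)).g = 0 := rfl

@[simp]
theorem extendLabel_o_true (L : Label V C) (j : V) (m : C) :
    (extendLabel P L (j, m, true)).o = 0 := rfl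

variable {P} {L1 L2 : Label V C} {j : V} {m : C}

theorem extendLabel_t_true_le_false (hnode : L1.node = L2.node) (ht : L1.t ≤ L2.t - P.B) :
    (extendLabel P L1 (j, m, true)).t ≤ (extendLabel P L2 (j, m, false)).t := by
  simp only [extendLabel, if_true, Bool.false_eq_true, if_false, hnode]
  exact max_le_max_right _ (by linarith)

theorem extendLabel_cbar_le (hnode : L1.node = L2.node) (hc : L1.cbar ≤ L2.cbar) (b1 b2 : Bool) :
    (extendLabel P L1 (j, m, b1)).cbar ≤ (extendLabel P L2 (j, m, b2)).cbar := by
  simp only [extendLabel, hnode]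
  linarith

theorem extendLabel_load_le (hload : ∀ m', L1.load m' ≤ L2.load m') (b1 b2 : Bool) :
    (extendLabel P L1 (j, m, b1)).load ≤ (extendLabel P L2 (j, m, b2)).load :=
  update_le_update_iff.2 ⟨by linarith [hload m], fun m' _ => hload m'⟩

theorem feasStep_of_extendLabel_le [Fintype C] {m1 m2 : C} {b1 b2 : Bool}
    (ht : (extendLabel P L1 (j, m1, b1)).t ≤ (extendLabel P L2 (j, m2, b2)).t)
    (hload : (extendLabel P L1 (j, m1, b1)).load ≤ (extendLabel P L2 (j, m2, b2)).load)
    (hS : L1.S ⊆ L2.S)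
    (hg : (extendLabel P L1 (j, m1, b1)).g ≤ (extendLabel P L2 (j, m2, b2)).g)
    (ho : (extendLabel P L1 (j, m1, b1)).o ≤ (extendLabel P L2 (j, m2, b2)).o)
    (h : feasStep P L2 (j, m2, b2)) : feasStep P L1 (j, m1, b1) := by
  obtain ⟨hwe, hcap, htot, hnotS, hgT, hoD⟩ := h
  exact ⟨ht.trans hwe, fun m' => (hload m').trans (hcap m'),
    (Finset.sum_le_sum fun m' _ => hload m').trans htot, fun hj => hnotS (hS hj),
    hg.trans hgT, ho.trans hoD⟩

end ExtendLabel

theorem inter_day_dominance_valid_general {V C : Type} [DecidableEq C] [Fintype C]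
    (P : Params V C)
    (L1 L2 : Label V C) (j : V) (m : C)
    (hnode : L1.node = L2.node)
    (ht : L1.t ≤ L2.t - P.B) (hc : L1.cbar ≤ L2.cbar)
    (hS : L1.S ⊆ L2.S)
    (hload : ∀ m', L1.load m' ≤ L2.load m')
    (hg2 : 0 ≤ (extendLabel P L2 (j, m, false)).g)
    (ho2 : 0 ≤ (extendLabel P L2 (j, m, false)).o)
    (hfeas : feasStep P L2 (j, m, false)) :
    feasStep P L1 (j, m, true) ∧
    (extendLabel P L1 (j, m, true)).t ≤ (extendLabel P L2 (j, m, false)).t ∧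
    (extendLabel P L1 (j, m, true)).cbar ≤ (extendLabel P L2 (j, m, false)).cbar ∧
    (extendLabel P L1 (j, m, true)).g = 0 ∧
    (extendLabel P L1 (j, m, true)).o = 0 ∧
    (extendLabel P L1 (j, m, true)).g ≤ (extendLabel P L2 (j, m, false)).g ∧
    (extendLabel P L1 (j, m, true)).o ≤ (extendLabel P L2 (j, m, false)).o := by
  have harrive := extendLabel_t_true_le_false (j := j) (m := m) hnode ht
  have hg := (extendLabel_g_true P L1 j m).trans_le hg2
  have ho := (extendLabel_o_true P L1 j m).trans_le ho2
  exact ⟨feasStep_of_extendLabel_le harrive (extendLabel_load_le hload _ _) hS hg ho hfeas,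
    harrive, extendLabel_cbar_le hnode hc _ _, extendLabel_g_true P L1 j m,
    extendLabel_o_true P L1 j m, hg, ho⟩

/-- Validity of the inter-day dominance rule: under the inter-day
dominance conditions, any feasible no-break extension of `L2` along an arc can be
matched by the same extension of `L1` taken with an immediate break: it is
feasible, arrives no later, has reduced cost no larger, and its daily working
time and driving distance equal their post-break values 0 (hence at most those
of `L2`'s extension). -/
theorem inter_day_dominance_valid {V C : Type} [DecidableEq C] [Fintype C]
    (P : Params V C) (hB : 0 < P.B) (hT : 0 ≤ P.T) (hD : 0 ≤ P.DistMax)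
    (L1 L2 : Label V C) (j : V) (m : C)
    (hnode : L1.node = L2.node)
    (ht : L1.t ≤ L2.t - P.B) (hc : L1.cbar ≤ L2.cbar) (hday : L1.day < L2.day)
    (hS : L1.S ⊆ L2.S)
    (hload : ∀ m', L1.load m' ≤ L2.load m')
    (hO : ∀ m', L1.O m' ⊆ L2.O m')
    (hg2 : 0 ≤ (extendLabel P L2 (j, m, false)).g)
    (ho2 : 0 ≤ (extendLabel P L2 (j, m, false)).o)
    (hfeas : feasStep P L2 (j, m, false)) :
    feasStep P L1 (j, m, true) ∧
    (extendLabel P L1 (j, m, true)).t ≤ (extendLabel P L2 (j, m, false)).t ∧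
    (extendLabel P L1 (j, m, true)).cbar ≤ (extendLabel P L2 (j, m, false)).cbar ∧
    (extendLabel P L1 (j, m, true)).g = 0 ∧
    (extendLabel P L1 (j, m, true)).o = 0 ∧
    (extendLabel P L1 (j, m, true)).g ≤ (extendLabel P L2 (j, m, false)).g ∧
    (extendLabel P L1 (j, m, true)).o ≤ (extendLabel P L2 (j, m, false)).o :=
  inter_day_dominance_valid_general P L1 L2 j m hnode ht hc hS hload hg2 ho2 hfeas
end
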